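/- arXiv:1311.3895 — 3 statements merged into one kernel-verified Lean document; each statement's English description precedes it below -/
import Mathlib

section
/- Let d ≥ 1 and let τ : ℝ → ℝ∪{−∞} satisfy the necessary properties of an L^q-spectrum in dimension d, with dom(τ) = [0,∞). Then the duality (τ*)* = τ holds on ℝ: for every q ∈ ℝ, τ(q) = inf{qα − τ*(α) : α ∈ ℝ∪{∞}, τ*(α) > −∞}, with the conventions q·∞ = +∞ for q > 0, q·∞ = −∞ for q < 0, and 0·∞ = 0. -/
open MeasureTheory Metric Set Filter Topology
open scoped ENNReal NNReal

noncomputable section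

/-- `ℝ^d` with the Euclidean metric. -/
abbrev Euc (d : ℕ) : Type := EuclideanSpace ℝ (Fin d)

/-- The topological support of a Borel measure on `ℝ^d`. -/
def msupp {d : ℕ} (μ : Measure (Euc d)) : Set (Euc d) :=
  {x | ∀ r : ℝ, 0 < r → 0 < μ (closedBall x r)}

/-- `μ ∈ 𝓜_c^+(ℝ^d)`: a nonzero finite compactly supported Borel measure. -/
def McPlus {d : ℕ} (μ : Measure (Euc d)) : Prop :=
  IsFiniteMeasure μ ∧ μ ≠ 0 ∧ ∃ K : Set (Euc d), IsCompact K ∧ μ Kᶜ = 0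

/-- Logarithm `ℝ≥0∞ → EReal`, with `log 0 = ⊥` and `log ⊤ = ⊤`. -/
def elog (x : ℝ≥0∞) : EReal :=
  if x = 0 then ⊥ else if x = ⊤ then ⊤ else ((Real.log x.toReal : ℝ) : EReal)

/-- Lower local dimension `liminf_{r→0⁺} log μ(B(x,r)) / log r`, valued in `EReal`. -/
def dLow {d : ℕ} (μ : Measure (Euc d)) (x : Euc d) : EReal :=
  Filter.liminf
    (fun r : ℝ => elog (μ (closedBall x r)) * (((Real.log r)⁻¹ : ℝ) : EReal)) (𝓝[>] (0:ℝ))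

/-- Upper local dimension `limsup_{r→0⁺} log μ(B(x,r)) / log r`, valued in `EReal`. -/
def dUp {d : ℕ} (μ : Measure (Euc d)) (x : Euc d) : EReal :=
  Filter.limsup
    (fun r : ℝ => elog (μ (closedBall x r)) * (((Real.log r)⁻¹ : ℝ) : EReal)) (𝓝[>] (0:ℝ))

/-- The level set `E(μ,α,β)`. -/
def Eab {d : ℕ} (μ : Measure (Euc d)) (α β : EReal) : Set (Euc d) :=
  {x ∈ msupp μ | dLow μ x = α ∧ dUp μ x = β}

/-- The level set `E̲(μ,α)`. -/
def Elow {d : ℕ} (μ : Measure (Euc d)) (α : EReal) : Set (Euc d) :=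
  {x ∈ msupp μ | dLow μ x = α}

/-- The level set `Ē(μ,α)`. -/
def Eup {d : ℕ} (μ : Measure (Euc d)) (α : EReal) : Set (Euc d) :=
  {x ∈ msupp μ | dUp μ x = α}

/-- The level set `E(μ,α) = E(μ,α,α)`. -/
def Epoint {d : ℕ} (μ : Measure (Euc d)) (α : EReal) : Set (Euc d) := Eab μ α α

-- Hausdorff dimension with the convention `dim_H ∅ = −∞`, valued in `EReal`.
open Classical in
def dimHE {X : Type*} [EMetricSpace X] (s : Set X) : EReal :=
  if s = ∅ then ⊥ else ((dimH s : ℝ≥0∞) : EReal)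

/-- A centered packing of `supp μ` by pairwise disjoint closed balls of radius `r`. -/
def IsPacking {d : ℕ} (μ : Measure (Euc d)) (r : ℝ) (P : Set (Euc d)) : Prop :=
  P ⊆ msupp μ ∧ P.PairwiseDisjoint fun x => closedBall x r

/-- `sup { Σ_i μ(B(x_i,r))^q }` over all centered packings of radius `r`. -/
def packSum {d : ℕ} (μ : Measure (Euc d)) (q r : ℝ) : ℝ≥0∞ :=
  ⨆ (P : Set (Euc d)) (_ : IsPacking μ r P), ∑' x : P, μ (closedBall (x : Euc d) r) ^ q

/-- The lower `L^q`-spectrum `τ_μ`. -/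
def tauLow {d : ℕ} (μ : Measure (Euc d)) (q : ℝ) : EReal :=
  Filter.liminf (fun r : ℝ => elog (packSum μ q r) * (((Real.log r)⁻¹ : ℝ) : EReal)) (𝓝[>] (0:ℝ))

/-- The upper `L^q`-spectrum `τ̄_μ`. -/
def tauUp {d : ℕ} (μ : Measure (Euc d)) (q : ℝ) : EReal :=
  Filter.limsup (fun r : ℝ => elog (packSum μ q r) * (((Real.log r)⁻¹ : ℝ) : EReal)) (𝓝[>] (0:ℝ))

/-- Extended concave Legendre–Fenchel transform of `τ : ℝ → ℝ∪{−∞}` at `α ∈ ℝ∪{∞}`;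
the `EReal` product `α * q` encodes the conventions `∞·q = −∞` for `q < 0`, `∞·0 = 0`. -/
def eLegendre (τ : ℝ → EReal) (α : EReal) : EReal :=
  sInf {v : EReal | ∃ q : ℝ, τ q ≠ ⊥ ∧ (α = ⊤ → q ≤ 0) ∧ v = α * (q : EReal) - τ q}

/-- Legendre–Fenchel transform `f*` of a spectrum `f` defined on `ℝ∪{∞}`;
the `EReal` product `q * α` encodes the conventions `q·∞ = ±∞` for `q ≷ 0`, `0·∞ = 0`. -/
def specStar (f : EReal → EReal) (q : ℝ) : EReal :=
  sInf {v : EReal | ∃ α : EReal, α ≠ ⊥ ∧ f α ≠ ⊥ ∧ v = (q : EReal) * α - f α}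

/-- `sup #{i : lo ≤ μ(B(x_i,r)) ≤ hi}` over all centered packings of radius `r`. -/
def ldCount {d : ℕ} (μ : Measure (Euc d)) (lo hi : ℝ≥0∞) (r : ℝ) : ℝ≥0∞ :=
  ⨆ (P : Set (Euc d)) (_ : IsPacking μ r P),
    ({x ∈ P | lo ≤ μ (closedBall x r) ∧ μ (closedBall x r) ≤ hi}).encard

/-- `r ^ γ` for an extended exponent `γ`, with the convention `r^∞ = 0`. -/
def rpowE (r : ℝ) (γ : EReal) : ℝ≥0∞ :=
  if γ = ⊤ then 0 else if γ = ⊥ then ⊤ else ENNReal.ofReal (r ^ γ.toReal)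

/-- The lower large-deviations spectrum `f̲^LD_μ(α,β)` for `0 ≤ α ≤ β ≤ ∞`. -/
def fLDlowAB {d : ℕ} (μ : Measure (Euc d)) (α β : EReal) : EReal :=
  if α = ⊤ then
    ⨅ A : ℝ, Filter.liminf
      (fun r : ℝ => elog (ldCount μ 0 (ENNReal.ofReal (r ^ A)) r) * (((-Real.log r)⁻¹ : ℝ) : EReal))
      (𝓝[>] (0:ℝ))
  else
    ⨅ (ε : ℝ) (_ : 0 < ε), Filter.liminf
      (fun r : ℝ =>
        elog (ldCount μ (rpowE r (β + (ε : EReal))) (rpowE r (α - (ε : EReal))) r) *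
          (((-Real.log r)⁻¹ : ℝ) : EReal))
      (𝓝[>] (0:ℝ))

/-- The lower large-deviations spectrum `f̲^LD_μ(α)`. -/
def fLDlow {d : ℕ} (μ : Measure (Euc d)) (α : EReal) : EReal := fLDlowAB μ α α

/-- The upper large-deviations spectrum `f̄^LD_μ(α)`. -/
def fLDup {d : ℕ} (μ : Measure (Euc d)) (α : EReal) : EReal :=
  if α = ⊤ then
    ⨅ A : ℝ, Filter.limsup
      (fun r : ℝ => elog (ldCount μ 0 (ENNReal.ofReal (r ^ A)) r) * (((-Real.log r)⁻¹ : ℝ) : EReal))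
      (𝓝[>] (0:ℝ))
  else
    ⨅ (ε : ℝ) (_ : 0 < ε), Filter.limsup
      (fun r : ℝ =>
        elog (ldCount μ (rpowE r (α + (ε : EReal))) (rpowE r (α - (ε : EReal))) r) *
          (((-Real.log r)⁻¹ : ℝ) : EReal))
      (𝓝[>] (0:ℝ))

/-- `μ` is exact dimensional with dimension `D`. -/
def ExactDim {d : ℕ} (μ : Measure (Euc d)) (D : ℝ) : Prop :=
  ∀ᵐ x ∂μ, Filter.Tendsto (fun r : ℝ => Real.log (μ (closedBall x r)).toReal / Real.log r)
    (𝓝[>] (0:ℝ)) (𝓝 D)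

/-- `μ` is homogeneously multifractal: the lower Hausdorff spectrum of the restriction of `μ`
to any closed ball whose interior meets `supp μ` coincides with that of `μ`. -/
def HMmeas {d : ℕ} (μ : Measure (Euc d)) : Prop :=
  ∀ (c : Euc d) (R : ℝ), (interior (closedBall c R) ∩ msupp μ).Nonempty →
    ∀ α : EReal, 0 ≤ α →
      dimHE (Elow (μ.restrict (closedBall c R)) α) = dimHE (Elow μ α)

/-- The necessary properties of an `L^q`-spectrum in dimension `d`. -/
structure IsLqSpec (d : ℕ) (τ : ℝ → EReal) : Prop where
  ne_top : ∀ q : ℝ, τ q ≠ ⊤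
  concave : ∀ q₁ q₂ t : ℝ, 0 ≤ t → t ≤ 1 →
    ((t : ℝ) : EReal) * τ q₁ + (((1 - t : ℝ)) : EReal) * τ q₂ ≤ τ (t * q₁ + (1 - t) * q₂)
  mono : Monotone τ
  at_one : τ 1 = 0
  neg_d_le : -(((d : ℝ)) : EReal) ≤ τ 0
  le_zero : τ 0 ≤ 0
  dom : {q : ℝ | τ q ≠ ⊥} = Set.univ ∨ {q : ℝ | τ q ≠ ⊥} = Set.Ici 0
  star_nonneg : ∀ α : EReal, eLegendre τ α ≠ ⊥ → 0 ≤ eLegendre τ α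

/-- The class `𝓕(d)` of candidate lower Hausdorff spectra, viewed as functions on
`ℝ∪{∞} ⊂ EReal` (the value at `⊥` is irrelevant: the domain condition forces `f ⊥ = ⊥`). -/
structure IsFd (d : ℕ) (f : EReal → EReal) : Prop where
  hasFix : ∃ D : ℝ, f ((D : ℝ) : EReal) = ((D : ℝ) : EReal)
  dom_sub : {α : EReal | f α ≠ ⊥} ⊆ Set.Ici (0 : EReal)
  dom_closed : IsClosed {α : EReal | f α ≠ ⊥}
  range' : ∀ α : EReal, f α = ⊥ ∨ (0 ≤ f α ∧ f α ≤ ((d : ℝ) : EReal))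
  usc : UpperSemicontinuousOn f {α : EReal | ⊥ < α}
  le_id : ∀ α : EReal, f α ≤ α

/-- Concavity of a spectrum on the real part of its domain. -/
def SpecConcave (f : EReal → EReal) : Prop :=
  ∀ α₁ α₂ t : ℝ, f ((α₁ : ℝ) : EReal) ≠ ⊥ → f ((α₂ : ℝ) : EReal) ≠ ⊥ → 0 ≤ t → t ≤ 1 →
    ((t : ℝ) : EReal) * f ((α₁ : ℝ) : EReal) + (((1 - t : ℝ)) : EReal) * f ((α₂ : ℝ) : EReal) ≤
      f (((t * α₁ + (1 - t) * α₂ : ℝ)) : EReal)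

/-!
On its domain `[0, ∞)` the spectrum `τ` is a real concave function, so `τ q ≤ q α - τ* α` is the
Fenchel–Young inequality, and equality is attained: for `q > 0` at a supergradient `α` of `τ`
at the interior point `q`, and for `q ≤ 0` at `α = ∞`, since `τ* ∞ = -τ 0` and
`q · ∞ - τ* ∞` is `τ 0` for `q = 0` and `-∞` for `q < 0`.
-/

theorem ConvexOn.exists_affine_le_of_mem_interior {S : Set ℝ} {f : ℝ → ℝ} {x : ℝ}
    (hf : ConvexOn ℝ S f) (hx : x ∈ interior S) :
    ∃ a : ℝ, ∀ y ∈ S, f x + a * (y - x) ≤ f y := by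
  refine ⟨derivWithin f (Ioi x) x, fun y hy => ?_⟩
  rcases lt_trichotomy y x with hyx | rfl | hxy
  · have hslope : slope f y x ≤ derivWithin f (Ioi x) x :=
      (hf.slope_le_leftDeriv_of_mem_interior hy hx hyx).trans
        (hf.leftDeriv_le_rightDeriv_of_mem_interior hx)
    rw [slope_def_field, div_le_iff₀ (by linarith)] at hslope
    nlinarith
  · simp
  · have hslope : derivWithin f (Ioi x) x ≤ slope f x y :=
      hf.rightDeriv_le_slope_of_mem_interior hx hy hxy
    rw [slope_def_field, le_div_iff₀ (by linarith)] at hslope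
    linarith

theorem ConcaveOn.exists_le_affine_of_mem_interior {S : Set ℝ} {f : ℝ → ℝ} {x : ℝ}
    (hf : ConcaveOn ℝ S f) (hx : x ∈ interior S) :
    ∃ a : ℝ, ∀ y ∈ S, f y ≤ f x + a * (y - x) := by
  obtain ⟨a, ha⟩ := hf.neg.exists_affine_le_of_mem_interior hx
  refine ⟨-a, fun y hy => ?_⟩
  have h := ha y hy
  simp only [Pi.neg_apply] at h
  linarith

theorem eLegendre_coe_le (τ : ℝ → EReal) (a q : ℝ) (hq : τ q ≠ ⊥) :
    eLegendre τ a ≤ a * q - τ q :=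
  sInf_le ⟨q, hq, fun h => absurd h (EReal.coe_ne_top a), rfl⟩

theorem eLegendre_top_of_dom_eq_Ici (τ : ℝ → EReal) (hdom : {q : ℝ | τ q ≠ ⊥} = Ici 0) :
    eLegendre τ ⊤ = -τ 0 := by
  have hset : {v : EReal | ∃ q : ℝ, τ q ≠ ⊥ ∧ ((⊤ : EReal) = ⊤ → q ≤ 0) ∧
      v = ⊤ * (q : EReal) - τ q} = {-τ 0} := by
    ext v
    simp only [mem_ofPred_eq, mem_singleton_iff, forall_const]
    constructor
    · rintro ⟨q, hq, hq0, rfl⟩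
      obtain rfl : q = 0 := le_antisymm hq0 (hdom.subset hq)
      simp [sub_eq_add_neg]
    · rintro rfl
      exact ⟨0, hdom.symm.subset (mem_Ici.2 le_rfl), le_rfl, by simp [sub_eq_add_neg]⟩
  rw [eLegendre, hset, sInf_singleton]

theorem coe_mul_top_sub_eLegendre_top_of_dom_eq_Ici (τ : ℝ → EReal)
    (hdom : {q : ℝ | τ q ≠ ⊥} = Ici 0) {q : ℝ} (hq : q ≤ 0) :
    (q : EReal) * ⊤ - eLegendre τ ⊤ = τ q := by
  rw [eLegendre_top_of_dom_eq_Ici τ hdom]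
  rcases hq.lt_or_eq with hq | rfl
  · have hτq : τ q = ⊥ := by_contra fun h => not_le.2 hq (hdom.subset h)
    rw [hτq, EReal.coe_mul_top_of_neg hq, EReal.bot_sub]
  · simp [sub_eq_add_neg]

namespace IsLqSpec

variable {d : ℕ} {τ : ℝ → EReal}

theorem coe_toReal (hτ : IsLqSpec d τ) {q : ℝ} (hq : τ q ≠ ⊥) : ((τ q).toReal : EReal) = τ q :=
  EReal.coe_toReal (hτ.ne_top q) hq

theorem le_coe_mul_sub_eLegendre (hτ : IsLqSpec d τ) (q a : ℝ) (hL : eLegendre τ a ≠ ⊥) :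
    τ q ≤ q * a - eLegendre τ a := by
  by_cases hq : τ q = ⊥
  · simp [hq]
  have hle := eLegendre_coe_le τ a q hq
  rw [← hτ.coe_toReal hq, ← EReal.coe_mul, ← EReal.coe_sub] at hle
  have hLtop : eLegendre τ a ≠ ⊤ := ne_top_of_le_ne_top (EReal.coe_ne_top _) hle
  rw [← EReal.coe_toReal hLtop hL, EReal.coe_le_coe_iff] at hle
  rw [← hτ.coe_toReal hq, ← EReal.coe_toReal hLtop hL, ← EReal.coe_mul, ← EReal.coe_sub,
    EReal.coe_le_coe_iff]
  linarith

theorem eLegendre_coe_eq_of_le_affine (hτ : IsLqSpec d τ) {q a : ℝ} (hq : τ q ≠ ⊥)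
    (hsup : ∀ p, τ p ≠ ⊥ → (τ p).toReal ≤ (τ q).toReal + a * (p - q)) :
    eLegendre τ a = a * q - τ q := by
  refine le_antisymm (eLegendre_coe_le τ a q hq) (le_sInf ?_)
  rintro _ ⟨p, hp, -, rfl⟩
  rw [← hτ.coe_toReal hq, ← hτ.coe_toReal hp, ← EReal.coe_mul, ← EReal.coe_mul, ← EReal.coe_sub,
    ← EReal.coe_sub, EReal.coe_le_coe_iff]
  linarith [hsup p hp]

variable (hdom : {q : ℝ | τ q ≠ ⊥} = Ici 0)
include hdom

theorem concaveOn_toReal (hτ : IsLqSpec d τ) :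
    ConcaveOn ℝ (Ici 0) fun q => (τ q).toReal := by
  refine ⟨convex_Ici 0, fun x hx y hy a b ha hb hab => ?_⟩
  obtain rfl : b = 1 - a := by linarith
  have hx' : τ x ≠ ⊥ := hdom.symm.subset hx
  have hy' : τ y ≠ ⊥ := hdom.symm.subset hy
  have key := hτ.concave x y a ha (by linarith)
  rw [← hτ.coe_toReal hx', ← hτ.coe_toReal hy', ← EReal.coe_mul, ← EReal.coe_mul,
    ← EReal.coe_add] at key
  have hz : τ (a * x + (1 - a) * y) ≠ ⊥ := ne_bot_of_le_ne_bot (EReal.coe_ne_bot _) key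
  rw [← hτ.coe_toReal hz, EReal.coe_le_coe_iff] at key
  simpa only [smul_eq_mul] using key

theorem le_coe_mul_sub_eLegendre_top (hτ : IsLqSpec d τ) (q : ℝ) :
    τ q ≤ q * ⊤ - eLegendre τ ⊤ := by
  rcases le_or_gt q 0 with hq | hq
  · exact (coe_mul_top_sub_eLegendre_top_of_dom_eq_Ici τ hdom hq).ge
  · rw [EReal.coe_mul_top_of_pos hq, eLegendre_top_of_dom_eq_Ici τ hdom, ← hτ.coe_toReal
      (hdom.symm.subset (mem_Ici.2 le_rfl)), ← EReal.coe_neg, EReal.top_sub_coe]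
    exact le_top

theorem le_mul_sub_eLegendre (hτ : IsLqSpec d τ) (q : ℝ) {α : EReal} (hα : α ≠ ⊥)
    (hL : eLegendre τ α ≠ ⊥) : τ q ≤ q * α - eLegendre τ α := by
  induction α with
  | bot => exact absurd rfl hα
  | coe a => exact hτ.le_coe_mul_sub_eLegendre q a hL
  | top => exact hτ.le_coe_mul_sub_eLegendre_top hdom q

theorem exists_eq_mul_sub_eLegendre (hτ : IsLqSpec d τ) (q : ℝ) :
    ∃ α : EReal, α ≠ ⊥ ∧ eLegendre τ α ≠ ⊥ ∧ τ q = q * α - eLegendre τ α := by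
  rcases le_or_gt q 0 with hq | hq
  · refine ⟨⊤, top_ne_bot, ?_, (coe_mul_top_sub_eLegendre_top_of_dom_eq_Ici τ hdom hq).symm⟩
    rw [eLegendre_top_of_dom_eq_Ici τ hdom, ← hτ.coe_toReal (hdom.symm.subset (mem_Ici.2 le_rfl)),
      ← EReal.coe_neg]
    exact EReal.coe_ne_bot _
  · have hq' : τ q ≠ ⊥ := hdom.symm.subset (mem_Ici.2 hq.le)
    obtain ⟨a, ha⟩ := (hτ.concaveOn_toReal hdom).exists_le_affine_of_mem_interior
      (by rwa [interior_Ici])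
    have hL := hτ.eLegendre_coe_eq_of_le_affine hq' fun p hp => ha p (hdom.subset hp)
    rw [← hτ.coe_toReal hq', ← EReal.coe_mul, ← EReal.coe_sub] at hL
    refine ⟨a, EReal.coe_ne_bot a, hL ▸ EReal.coe_ne_bot _, ?_⟩
    rw [hL, ← EReal.coe_mul, ← EReal.coe_sub, mul_comm q a, sub_sub_cancel, hτ.coe_toReal hq']

end IsLqSpec

theorem statement7_general (d : ℕ) (τ : ℝ → EReal) (hτ : IsLqSpec d τ)
    (hdom : {q : ℝ | τ q ≠ ⊥} = Set.Ici 0) :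
    ∀ q : ℝ, τ q = sInf {v : EReal | ∃ α : EReal, α ≠ ⊥ ∧ eLegendre τ α ≠ ⊥ ∧
        v = ((q : ℝ) : EReal) * α - eLegendre τ α} := by
  intro q
  obtain ⟨α, hα, hL, hq⟩ := hτ.exists_eq_mul_sub_eLegendre hdom q
  refine le_antisymm (le_sInf ?_) (sInf_le ⟨α, hα, hL, hq⟩)
  rintro _ ⟨β, hβ, hLβ, rfl⟩
  exact hτ.le_mul_sub_eLegendre hdom q hβ hLβ

/-- Proposition 1.4(2)(d): the duality `(τ*)* = τ` on `ℝ`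
when `dom τ = [0,∞)`. -/
theorem statement7 (d : ℕ) (hd : 1 ≤ d) (τ : ℝ → EReal) (hτ : IsLqSpec d τ)
    (hdom : {q : ℝ | τ q ≠ ⊥} = Set.Ici 0) :
    ∀ q : ℝ, τ q = sInf {v : EReal | ∃ α : EReal, α ≠ ⊥ ∧ eLegendre τ α ≠ ⊥ ∧
        v = ((q : ℝ) : EReal) * α - eLegendre τ α} :=
  statement7_general d τ hτ hdom

end
end

section
/- For every integer d ≥ 1, every μ ∈ M_c^+(ℝ^d), and every α ∈ [0,∞]: f̲^LD_μ(α) ≤ τ̄_μ*(α), where τ̄_μ* denotes the extended concave Legendre–Fenchel transform of the upper L^q-spectrum τ̄_μ. -/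
open MeasureTheory Metric Set Filter Topology
open scoped ENNReal NNReal

noncomputable section

/-! If a centered packing of radius `r` has `N` balls with `r^(α+ε) ≤ μ(B) ≤ r^(α-ε)`, each of
them contributes at least `r^((α±ε)q)` to `Σ μ(B)^q` (the sign being that of `q`), so
`N r^((α±ε)q) ≤ packSum μ q r`. Taking `log / (-log r)` and the `liminf` as `r → 0` gives
`f̲^LD_μ(α) ≤ (α±ε)q - τ̄_μ(q)`, and `ε → 0` gives `αq - τ̄_μ(q)`. For `α = ∞` the balls with
`μ(B) ≤ r^A` give `f̲^LD_μ(∞) ≤ Aq - τ̄_μ(q)` for `q ≤ 0`, which tends to `-∞` as `A → ∞`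
when `q < 0`. -/

lemma ENNReal.rpow_le_rpow_of_nonpos {x y : ℝ≥0∞} {z : ℝ} (hxy : x ≤ y) (hz : z ≤ 0) :
    y ^ z ≤ x ^ z := by
  rw [← neg_neg z, ENNReal.rpow_neg y, ENNReal.rpow_neg x]
  exact ENNReal.inv_le_inv.2 (ENNReal.rpow_le_rpow hxy (neg_nonneg.2 hz))

lemma ENNReal.ofReal_rpow_mul_le_rpow {r b q : ℝ} {m : ℝ≥0∞} (hr : 0 < r) (hq : 0 ≤ q)
    (hm : ENNReal.ofReal (r ^ b) ≤ m) : ENNReal.ofReal (r ^ (b * q)) ≤ m ^ q := by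
  rw [Real.rpow_mul hr.le, ← ENNReal.ofReal_rpow_of_pos (Real.rpow_pos_of_pos hr b)]
  exact ENNReal.rpow_le_rpow hm hq

lemma ENNReal.ofReal_rpow_mul_le_rpow_of_nonpos {r b q : ℝ} {m : ℝ≥0∞} (hr : 0 < r)
    (hq : q ≤ 0) (hm : m ≤ ENNReal.ofReal (r ^ b)) : ENNReal.ofReal (r ^ (b * q)) ≤ m ^ q := by
  rw [Real.rpow_mul hr.le, ← ENNReal.ofReal_rpow_of_pos (Real.rpow_pos_of_pos hr b)]
  exact ENNReal.rpow_le_rpow_of_nonpos hm hq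

lemma ENNReal.log_mul_inv_neg_log_le {r e : ℝ} {N S : ℝ≥0∞} (hr0 : 0 < r) (hr1 : r < 1)
    (h : N * ENNReal.ofReal (r ^ e) ≤ S) :
    ENNReal.log N * (((-Real.log r)⁻¹ : ℝ) : EReal)
      ≤ (e : EReal) + ENNReal.log S * (((-Real.log r)⁻¹ : ℝ) : EReal) := by
  have hL : 0 < -Real.log r := neg_pos.2 (Real.log_neg hr0 hr1)
  have hlog : ENNReal.log N + ((e * Real.log r : ℝ) : EReal) ≤ ENNReal.log S := by
    calc ENNReal.log N + ((e * Real.log r : ℝ) : EReal)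
        = ENNReal.log (N * ENNReal.ofReal (r ^ e)) := by
          rw [ENNReal.log_mul_add, ENNReal.log_ofReal_of_pos (Real.rpow_pos_of_pos hr0 e),
            Real.log_rpow hr0]
      _ ≤ ENNReal.log S := ENNReal.log_monotone h
  have hlog' : ENNReal.log N ≤ ENNReal.log S + ((e * -Real.log r : ℝ) : EReal) := by
    rw [mul_neg, EReal.coe_neg, ← sub_eq_add_neg]
    exact (EReal.le_sub_iff_add_le (.inl (EReal.coe_ne_bot _)) (.inl (EReal.coe_ne_top _))).2 hlog
  calc ENNReal.log N * (((-Real.log r)⁻¹ : ℝ) : EReal)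
      ≤ (ENNReal.log S + ((e * -Real.log r : ℝ) : EReal)) * (((-Real.log r)⁻¹ : ℝ) : EReal) :=
        mul_le_mul_of_nonneg_right hlog' (EReal.coe_nonneg.2 (inv_nonneg.2 hL.le))
    _ = (e : EReal) + ENNReal.log S * (((-Real.log r)⁻¹ : ℝ) : EReal) := by
        rw [EReal.right_distrib_of_nonneg_of_ne_top (EReal.coe_nonneg.2 (inv_nonneg.2 hL.le))
          (EReal.coe_ne_top _), ← EReal.coe_mul, mul_assoc, mul_inv_cancel₀ hL.ne', mul_one,
          add_comm]

lemma EReal.tendsto_sub_const {ι : Type*} {l : Filter ι} {g : ι → EReal} {c T : EReal}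
    (hg : Tendsto g l (𝓝 c)) (h : c ≠ ⊤ ∨ T ≠ ⊤) (h' : c ≠ ⊥ ∨ T ≠ ⊥) :
    Tendsto (fun i => g i - T) l (𝓝 (c - T)) :=
  (EReal.continuousAt_add (p := (c, -T)) (by simpa using h) (by simpa using h')).tendsto.comp
    (hg.prodMk_nhds tendsto_const_nhds)

lemma elog_eq_log : elog = ENNReal.log := rfl

lemma rpowE_coe (r b : ℝ) : rpowE r b = ENNReal.ofReal (r ^ b) := by
  simp [rpowE]

section LargeDeviations

variable {d : ℕ} (μ : Measure (Euc d))

lemma ldCount_mul_le_packSum {q r : ℝ} {lo hi c : ℝ≥0∞}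
    (hc : ∀ m : ℝ≥0∞, lo ≤ m → m ≤ hi → c ≤ m ^ q) :
    ldCount μ lo hi r * c ≤ packSum μ q r := by
  simp only [ldCount, ENNReal.iSup_mul]
  refine iSup₂_le fun P hP => ?_
  set P' : Set (Euc d) := {x ∈ P | lo ≤ μ (closedBall x r) ∧ μ (closedBall x r) ≤ hi}
  have hP' : IsPacking μ r P' := ⟨fun x hx => hP.1 hx.1, hP.2.subset fun x hx => hx.1⟩
  calc P'.encard * c = ∑' _ : P', c := (ENNReal.tsum_set_const P' c).symm
    _ ≤ ∑' x : P', μ (closedBall (x : Euc d) r) ^ q :=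
        ENNReal.tsum_le_tsum fun x => hc _ x.2.2.1 x.2.2.2
    _ ≤ packSum μ q r := le_iSup₂_of_le P' hP' le_rfl

lemma liminf_elog_div_le_sub_tauUp {q e : ℝ} {N : ℝ → ℝ≥0∞}
    (hN : ∀ᶠ r in 𝓝[>] (0:ℝ), N r * ENNReal.ofReal (r ^ e) ≤ packSum μ q r) :
    Filter.liminf (fun r : ℝ => elog (N r) * (((-Real.log r)⁻¹ : ℝ) : EReal)) (𝓝[>] (0:ℝ))
      ≤ (e : EReal) - tauUp μ q := by
  have hr : ∀ᶠ r in 𝓝[>] (0:ℝ), r ∈ Ioo (0:ℝ) 1 := Ioo_mem_nhdsGT one_pos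
  have hle : ∀ᶠ r in 𝓝[>] (0:ℝ), elog (N r) * (((-Real.log r)⁻¹ : ℝ) : EReal)
      ≤ (e : EReal) + -(elog (packSum μ q r) * (((Real.log r)⁻¹ : ℝ) : EReal)) := by
    filter_upwards [hr, hN] with r hr hS
    simpa only [elog_eq_log, inv_neg, EReal.coe_neg, mul_neg] using
      ENNReal.log_mul_inv_neg_log_le hr.1 hr.2 hS
  calc _ ≤ Filter.liminf (fun r : ℝ => (e : EReal)
          + -(elog (packSum μ q r) * (((Real.log r)⁻¹ : ℝ) : EReal))) (𝓝[>] (0:ℝ)) :=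
        Filter.liminf_le_liminf hle
    _ ≤ (e : EReal) + -tauUp μ q := by
        refine (EReal.liminf_add_le (u := fun _ => (e : EReal)) ?_ ?_).trans_eq ?_ <;>
          simp only [Filter.limsup_const, ne_eq, EReal.coe_ne_bot, EReal.coe_ne_top,
            not_false_eq_true, true_or]
        exact congrArg _ (EReal.liminf_neg (v := fun r : ℝ =>
          elog (packSum μ q r) * (((Real.log r)⁻¹ : ℝ) : EReal)))
    _ = (e : EReal) - tauUp μ q := (sub_eq_add_neg _ _).symm

lemma liminf_ldCount_le_sub_tauUp {q e : ℝ} {lo hi : ℝ → ℝ≥0∞}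
    (h : ∀ᶠ r in 𝓝[>] (0:ℝ), ∀ m : ℝ≥0∞, lo r ≤ m → m ≤ hi r → ENNReal.ofReal (r ^ e) ≤ m ^ q) :
    Filter.liminf (fun r : ℝ => elog (ldCount μ (lo r) (hi r) r) * (((-Real.log r)⁻¹ : ℝ) : EReal))
      (𝓝[>] (0:ℝ)) ≤ (e : EReal) - tauUp μ q :=
  liminf_elog_div_le_sub_tauUp μ (h.mono fun _ hr => ldCount_mul_le_packSum μ hr)

lemma fLDlow_coe_le (a q : ℝ) {ε : ℝ} (hε : 0 < ε) :
    fLDlow μ a ≤ ((a * q + |q| * ε : ℝ) : EReal) - tauUp μ q := by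
  rw [fLDlow, fLDlowAB, if_neg (EReal.coe_ne_top a)]
  refine (iInf₂_le ε hε).trans ?_
  simp only [← EReal.coe_add, ← EReal.coe_sub, rpowE_coe]
  rcases le_or_gt 0 q with hq | hq
  · rw [abs_of_nonneg hq, show a * q + q * ε = (a + ε) * q by ring]
    refine liminf_ldCount_le_sub_tauUp μ ?_
    filter_upwards [self_mem_nhdsWithin] with r (hr : 0 < r) m hm _
    exact ENNReal.ofReal_rpow_mul_le_rpow hr hq hm
  · rw [abs_of_neg hq, show a * q + -q * ε = (a - ε) * q by ring]
    refine liminf_ldCount_le_sub_tauUp μ ?_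
    filter_upwards [self_mem_nhdsWithin] with r (hr : 0 < r) m _ hm
    exact ENNReal.ofReal_rpow_mul_le_rpow_of_nonpos hr hq.le hm

lemma fLDlow_coe_le_sub_tauUp (a q : ℝ) :
    fLDlow μ a ≤ ((a * q : ℝ) : EReal) - tauUp μ q := by
  have hlim : Tendsto (fun ε : ℝ => ((a * q + |q| * ε : ℝ) : EReal)) (𝓝[>] 0) (𝓝 (a * q : ℝ)) :=
    (continuous_coe_real_ereal.tendsto _).comp
      (((continuous_const.add (continuous_const.mul continuous_id)).tendsto' 0 (a * q)
        (by simp)).mono_left nhdsWithin_le_nhds)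
  exact ge_of_tendsto
    (EReal.tendsto_sub_const hlim (.inl (EReal.coe_ne_top _)) (.inl (EReal.coe_ne_bot _)))
    (eventually_nhdsWithin_of_forall fun _ hε => fLDlow_coe_le μ a q hε)

lemma fLDlow_top_le {q : ℝ} (hq : q ≤ 0) (A : ℝ) :
    fLDlow μ ⊤ ≤ ((A * q : ℝ) : EReal) - tauUp μ q := by
  rw [fLDlow, fLDlowAB, if_pos rfl]
  refine (iInf_le _ A).trans (liminf_ldCount_le_sub_tauUp μ ?_)
  filter_upwards [self_mem_nhdsWithin] with r (hr : 0 < r) m _ hm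
  exact ENNReal.ofReal_rpow_mul_le_rpow_of_nonpos hr hq hm

lemma fLDlow_top_eq_bot {q : ℝ} (hq : q < 0) (hτ : tauUp μ q ≠ ⊥) : fLDlow μ ⊤ = ⊥ := by
  have hlim : Tendsto (fun A : ℝ => ((A * q : ℝ) : EReal)) atTop (𝓝 ⊥) :=
    EReal.tendsto_coe_atBot.comp (tendsto_id.atTop_mul_const_of_neg hq)
  refine le_bot_iff.1 ?_
  simpa using ge_of_tendsto (EReal.tendsto_sub_const hlim (.inl bot_ne_top) (.inr hτ))
    (Eventually.of_forall (fLDlow_top_le μ hq.le))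

end LargeDeviations

theorem statement13_general (d : ℕ) (μ : Measure (Euc d)) (α : EReal) (h0 : 0 ≤ α) :
    fLDlow μ α ≤ eLegendre (tauUp μ) α := by
  refine le_sInf ?_
  rintro _ ⟨q, hτ, hq_top, rfl⟩
  induction α with
  | bot => exact absurd h0 (by decide)
  | top =>
    rcases (hq_top rfl).lt_or_eq with hq | rfl
    · rw [fLDlow_top_eq_bot μ hq hτ]
      exact bot_le
    · simpa using fLDlow_top_le μ le_rfl 0
  | coe a =>
    rw [← EReal.coe_mul]
    exact fLDlow_coe_le_sub_tauUp μ a q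

/-- part of (1.2): `f̲^LD_μ(α) ≤ τ̄_μ*(α)` for every `α ∈ [0,∞]`. -/
theorem statement13 (d : ℕ) (hd : 1 ≤ d) (μ : Measure (Euc d)) (hμ : McPlus μ)
    (α : EReal) (h0 : 0 ≤ α) :
    fLDlow μ α ≤ eLegendre (tauUp μ) α :=
  statement13_general d μ α h0
end
end

section
/- For every integer d ≥ 1 and every μ ∈ M_c^+(ℝ^d): f̄^LD_μ(∞) ≤ τ_μ*(∞) and dim_H E(μ,∞) ≤ τ_μ*(∞) (with the convention dim_H ∅ = −∞). Explicitly: if dom(τ_μ) = ℝ then f̄^LD_μ(∞) = −∞ and E(μ,∞) = ∅, and if dom(τ_μ) = [0,∞) then f̄^LD_μ(∞) ≤ −τ_μ(0) and dim_H E(μ,∞) ≤ −τ_μ(0). -/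
open MeasureTheory Metric Set Filter Topology
open scoped ENNReal NNReal

noncomputable section

/-! For `q < 0`, one ball `B(x,r)` with `μ(B(x,r)) ≤ r^A` already contributes `r^(A q)` to the
packing sum at exponent `q`, and a packing of `N` such balls contributes `N r^(A q)`. Hence, once
`τ_μ(q) > -∞`, letting `A → ∞` shows that no point has infinite local dimension and that the
large-deviations count at `∞` decays faster than any power of `r`: both spectra are `-∞`.
At `q = 0` the packing sum is the maximal number of disjoint balls, which bounds the count of
`f̄^LD_μ(∞)` directly; the centres of a maximal packing of radius `r` give a cover of `supp μ` by
about `r^(τ_μ(0))` balls of radius `2r`, so `dim_H E(μ,∞) ≤ dim_H supp μ ≤ -τ_μ(0)`. -/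

theorem ENNReal.rpow_le_rpow_of_nonpos_s14 {a b : ℝ≥0∞} {q : ℝ} (hab : a ≤ b) (hq : q ≤ 0) :
    b ^ q ≤ a ^ q := by
  rw [← neg_neg q, ENNReal.rpow_neg b, ENNReal.rpow_neg a]
  exact ENNReal.inv_le_inv.2 (ENNReal.rpow_le_rpow hab (neg_nonneg.2 hq))

theorem EReal.le_neg_of_forall_coe_lt {x y : EReal} (h : ∀ c : ℝ, (c : EReal) < y → x ≤ -c) :
    x ≤ -y :=
  EReal.le_neg.2 <| EReal.ge_of_forall_gt_iff_ge.1 fun c hc => EReal.le_neg.1 (h c hc)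

theorem EReal.eq_bot_of_forall_le_coe {x : EReal} (h : ∀ c : ℝ, x ≤ c) : x = ⊥ :=
  (EReal.eq_bot_iff_forall_lt x).2 fun c =>
    (h (c - 1)).trans_lt (EReal.coe_lt_coe_iff.2 (sub_one_lt c))

theorem ENat.le_floor_of_toENNReal_le_ofReal {n : ℕ∞} {x : ℝ}
    (h : (n : ℝ≥0∞) ≤ ENNReal.ofReal x) : n ≤ ⌊x⌋₊ := by
  induction n using ENat.recTopCoe with
  | top => simp at h
  | coe n =>
    rcases eq_or_ne n 0 with rfl | hn
    · exact bot_le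
    · rw [ENat.toENNReal_coe, ENNReal.natCast_le_ofReal hn] at h
      exact_mod_cast Nat.le_floor h

section LogRatio

variable {y : ℝ≥0∞} {r b : ℝ}

theorem elog_mul_inv_log_of_ne (hy0 : y ≠ 0) (hy : y ≠ ⊤) :
    elog y * (((Real.log r)⁻¹ : ℝ) : EReal) = ((Real.log y.toReal / Real.log r : ℝ) : EReal) := by
  rw [elog, if_neg hy0, if_neg hy, ← EReal.coe_mul, div_eq_mul_inv]

theorem le_elog_mul_inv_log_iff (hr : 0 < r) (hr1 : r < 1) :
    (b : EReal) ≤ elog y * (((Real.log r)⁻¹ : ℝ) : EReal) ↔ y ≤ ENNReal.ofReal (r ^ b) := by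
  have hlog : Real.log r < 0 := Real.log_neg hr hr1
  have hinv : (((Real.log r)⁻¹ : ℝ) : EReal) < 0 := by exact_mod_cast inv_lt_zero.2 hlog
  rcases eq_or_ne y 0 with rfl | hy0
  · simp [elog, EReal.bot_mul_of_neg hinv]
  rcases eq_or_ne y ⊤ with rfl | hy
  · simp [elog, EReal.top_mul_of_neg hinv]
  have hpos : 0 < y.toReal := ENNReal.toReal_pos hy0 hy
  rw [elog_mul_inv_log_of_ne hy0 hy, EReal.coe_le_coe_iff, le_div_iff_of_neg hlog,
    ← Real.log_rpow hr, Real.log_le_log_iff hpos (Real.rpow_pos_of_pos hr b),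
    ENNReal.le_ofReal_iff_toReal_le hy (Real.rpow_nonneg hr.le b)]

theorem elog_mul_inv_log_le_iff (hr : 0 < r) (hr1 : r < 1) :
    elog y * (((Real.log r)⁻¹ : ℝ) : EReal) ≤ b ↔ ENNReal.ofReal (r ^ b) ≤ y := by
  have hlog : Real.log r < 0 := Real.log_neg hr hr1
  have hinv : (((Real.log r)⁻¹ : ℝ) : EReal) < 0 := by exact_mod_cast inv_lt_zero.2 hlog
  rcases eq_or_ne y 0 with rfl | hy0
  · simp [elog, EReal.bot_mul_of_neg hinv, Real.rpow_pos_of_pos hr b]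
  rcases eq_or_ne y ⊤ with rfl | hy
  · simp [elog, EReal.top_mul_of_neg hinv]
  have hpos : 0 < y.toReal := ENNReal.toReal_pos hy0 hy
  rw [elog_mul_inv_log_of_ne hy0 hy, EReal.coe_le_coe_iff, div_le_iff_of_neg hlog,
    ← Real.log_rpow hr, Real.log_le_log_iff (Real.rpow_pos_of_pos hr b) hpos,
    ENNReal.ofReal_le_iff_le_toReal hy]

theorem elog_mul_inv_neg_log_le_neg_iff (hr : 0 < r) (hr1 : r < 1) :
    elog y * (((-Real.log r)⁻¹ : ℝ) : EReal) ≤ -(b : EReal) ↔ y ≤ ENNReal.ofReal (r ^ b) := by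
  rw [inv_neg, EReal.coe_neg, mul_comm, EReal.neg_mul, mul_comm, EReal.neg_le_neg_iff,
    le_elog_mul_inv_log_iff hr hr1]

end LogRatio

theorem Metric.exists_finset_cover_closedBall_two_mul {X : Type*} [PseudoMetricSpace X]
    {s : Set X} {r : ℝ} {N : ℕ} (hr : 0 ≤ r)
    (h : ∀ P ⊆ s, P.PairwiseDisjoint (fun x => closedBall x r) → P.encard ≤ N) :
    ∃ P : Finset X, P.card ≤ N ∧ s ⊆ ⋃ x ∈ P, closedBall x (2 * r) := by
  set T : Set ℕ := {n | ∃ P ⊆ s, P.PairwiseDisjoint (fun x => closedBall x r) ∧ P.encard = n}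
  have hT : BddAbove T :=
    ⟨N, fun n ⟨P, hPs, hP, hn⟩ => ENat.natCast_le_natCast.1 (hn ▸ h P hPs hP)⟩
  obtain ⟨Q, hQs, hQ, hQcard⟩ : sSup T ∈ T :=
    Nat.sSup_mem ⟨0, ∅, empty_subset s, pairwiseDisjoint_empty, encard_empty⟩ hT
  have hQfin : Q.Finite := finite_of_encard_eq_coe hQcard
  refine ⟨hQfin.toFinset, ?_, fun y hy => ?_⟩
  · rw [← ENat.natCast_le_natCast, ← hQfin.encard_eq_coe_toFinset_card]
    exact h Q hQs hQ
  by_contra hyQ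
  simp only [Finite.mem_toFinset, mem_iUnion, mem_closedBall, exists_prop, not_exists,
    not_and, not_le] at hyQ
  -- a point at distance `> 2r` from all centres would enlarge the maximal packing `Q`
  have hyQ' : y ∉ Q := fun hy' => by linarith [hyQ y hy', dist_self y]
  have hmem : sSup T + 1 ∈ T := by
    refine ⟨insert y Q, insert_subset hy hQs, hQ.insert fun x hx _ => ?_, ?_⟩
    · exact closedBall_disjoint_closedBall (by linarith [hyQ x hx])
    · rw [encard_insert_of_notMem hyQ', hQcard]; rfl
  exact (le_csSup hT hmem).not_gt (Nat.lt_succ_self _)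

theorem Metric.ediam_closedBall_le_ofReal {X : Type*} [PseudoMetricSpace X] (x : X) {r : ℝ}
    (hr : 0 ≤ r) : ediam (closedBall x r) ≤ ENNReal.ofReal (2 * r) := by
  rw [← Metric.closedEBall_ofReal hr, ENNReal.ofReal_mul zero_le_two, ENNReal.ofReal_ofNat]
  exact ediam_closedEBall_le

theorem hausdorffMeasure_eq_zero_of_card_cover_le {X : Type*} [MetricSpace X] [MeasurableSpace X]
    [BorelSpace X] {s : Set X} {C t : ℝ} {D : ℝ≥0} (htD : t < D)
    (h : ∀ᶠ r in 𝓝[>] (0 : ℝ),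
      ∃ P : Finset X, (P.card : ℝ) ≤ C * r ^ (-t) ∧ s ⊆ ⋃ x ∈ P, closedBall x r) :
    μH[D] s = 0 := by
  obtain ⟨P, hP⟩ := h.choice
  have hsum : ∀ᶠ r in 𝓝[>] (0 : ℝ), ∑ x : P r, ediam (closedBall (x : X) r) ^ (D : ℝ) ≤
      ENNReal.ofReal (C * 2 ^ (D : ℝ) * r ^ ((D : ℝ) - t)) := by
    filter_upwards [hP, self_mem_nhdsWithin] with r ⟨hcard, _⟩ (hr : 0 < r)
    calc ∑ x : P r, ediam (closedBall (x : X) r) ^ (D : ℝ)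
        ≤ ∑ _x : P r, ENNReal.ofReal (2 * r) ^ (D : ℝ) := Finset.sum_le_sum fun x _ =>
          ENNReal.rpow_le_rpow (Metric.ediam_closedBall_le_ofReal _ hr.le) D.coe_nonneg
      _ = ENNReal.ofReal ((P r).card * (2 * r) ^ (D : ℝ)) := by
          rw [Finset.sum_const, Finset.card_univ, Fintype.card_coe, nsmul_eq_mul,
            ENNReal.ofReal_rpow_of_pos (by positivity), ENNReal.ofReal_mul (by positivity),
            ENNReal.ofReal_natCast]
      _ ≤ ENNReal.ofReal (C * r ^ (-t) * (2 * r) ^ (D : ℝ)) :=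
          ENNReal.ofReal_le_ofReal (mul_le_mul_of_nonneg_right hcard (by positivity))
      _ = ENNReal.ofReal (C * 2 ^ (D : ℝ) * r ^ ((D : ℝ) - t)) := by
          rw [Real.mul_rpow zero_le_two hr.le, sub_eq_neg_add, Real.rpow_add hr]
          ring_nf
  have hlim : Tendsto (fun r : ℝ => ENNReal.ofReal (C * 2 ^ (D : ℝ) * r ^ ((D : ℝ) - t)))
      (𝓝[>] 0) (𝓝 0) := by
    have hpow := (Real.continuousAt_rpow_const 0 _ (Or.inr (sub_nonneg.2 htD.le))).tendsto
    rw [Real.zero_rpow (sub_pos.2 htD).ne'] at hpow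
    simpa using ENNReal.tendsto_ofReal ((hpow.mono_left nhdsWithin_le_nhds).const_mul _)
  have hradius : Tendsto (fun r : ℝ => ENNReal.ofReal (2 * r)) (𝓝[>] 0) (𝓝 0) := by
    have := ENNReal.tendsto_ofReal ((tendsto_id.const_mul (2 : ℝ)).mono_left
      (nhdsWithin_le_nhds (s := Ioi (0 : ℝ)) (a := 0)))
    rwa [mul_zero, ENNReal.ofReal_zero] at this
  have hcover : ∀ᶠ r in 𝓝[>] (0 : ℝ), s ⊆ ⋃ x : P r, closedBall (x : X) r :=
    hP.mono fun r hr => by rw [iUnion_subtype]; exact hr.2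
  refine le_antisymm ?_ zero_le
  calc μH[D] s ≤ liminf (fun r => ∑ x : P r, ediam (closedBall (x : X) r) ^ (D : ℝ)) (𝓝[>] 0) :=
        Measure.hausdorffMeasure_le_liminf_sum (ι := fun r => P r) (D : ℝ) s _ hradius
          (fun r x => closedBall (x : X) r)
          (eventually_mem_nhdsWithin.mono fun r (hr : 0 < r) x =>
            Metric.ediam_closedBall_le_ofReal _ hr.le) hcover
    _ ≤ liminf (fun r : ℝ => ENNReal.ofReal (C * 2 ^ (D : ℝ) * r ^ ((D : ℝ) - t))) (𝓝[>] 0) :=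
        liminf_le_liminf hsum
    _ = 0 := hlim.liminf_eq

theorem dimH_le_of_card_cover_le {X : Type*} [MetricSpace X] {s : Set X} {C t : ℝ}
    (h : ∀ᶠ r in 𝓝[>] (0 : ℝ),
      ∃ P : Finset X, (P.card : ℝ) ≤ C * r ^ (-t) ∧ s ⊆ ⋃ x ∈ P, closedBall x r) :
    dimH s ≤ ENNReal.ofReal t := by
  borelize X
  refine dimH_le fun D hD => le_of_not_gt fun hlt => ?_
  rw [← ENNReal.ofReal_coe_nnreal, ENNReal.ofReal_lt_ofReal_iff'] at hlt
  simp [hausdorffMeasure_eq_zero_of_card_cover_le hlt.1 h] at hD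

section Packing

variable {d : ℕ} {μ : Measure (Euc d)} {q r c A : ℝ}

theorem tsum_le_packSum {P : Set (Euc d)} (hP : IsPacking μ r P) (q : ℝ) :
    ∑' x : P, μ (closedBall (x : Euc d) r) ^ q ≤ packSum μ q r :=
  le_iSup₂ (f := fun (P : Set (Euc d)) (_ : IsPacking μ r P) =>
    ∑' x : P, μ (closedBall (x : Euc d) r) ^ q) P hP

theorem encard_le_packSum_zero {P : Set (Euc d)} (hP : IsPacking μ r P) :
    (P.encard : ℝ≥0∞) ≤ packSum μ 0 r := by
  simpa [ENNReal.tsum_set_const] using tsum_le_packSum hP 0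

theorem rpow_le_packSum {x : Euc d} (hx : x ∈ msupp μ) (q r : ℝ) :
    μ (closedBall x r) ^ q ≤ packSum μ q r := by
  simpa using
    tsum_le_packSum (P := {x}) ⟨singleton_subset_iff.2 hx, pairwiseDisjoint_singleton _ _⟩ q

theorem rpow_mul_ldCount_le_packSum (hq : q ≤ 0) :
    ENNReal.ofReal (r ^ A) ^ q * ldCount μ 0 (ENNReal.ofReal (r ^ A)) r ≤ packSum μ q r := by
  rw [ldCount, ENNReal.mul_iSup]
  refine iSup_le fun P => ?_
  rw [ENNReal.mul_iSup]
  refine iSup_le fun hP => ?_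
  set S := {x ∈ P | 0 ≤ μ (closedBall x r) ∧ μ (closedBall x r) ≤ ENNReal.ofReal (r ^ A)}
  calc ENNReal.ofReal (r ^ A) ^ q * S.encard = ∑' _x : S, ENNReal.ofReal (r ^ A) ^ q := by
        rw [ENNReal.tsum_set_const, mul_comm]
    _ ≤ ∑' x : S, μ (closedBall (x : Euc d) r) ^ q :=
        ENNReal.tsum_le_tsum fun x => ENNReal.rpow_le_rpow_of_nonpos_s14 x.2.2.2 hq
    _ ≤ ∑' x : P, μ (closedBall (x : Euc d) r) ^ q :=
        ENNReal.tsum_mono_subtype (fun y => μ (closedBall y r) ^ q) (sep_subset _ _)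
    _ ≤ packSum μ q r := tsum_le_packSum hP q

theorem eventually_packSum_le_of_lt_tauLow (hc : (c : EReal) < tauLow μ q) :
    ∀ᶠ r in 𝓝[>] (0 : ℝ), packSum μ q r ≤ ENNReal.ofReal (r ^ c) := by
  filter_upwards [eventually_lt_of_lt_liminf hc, Ioo_mem_nhdsGT one_pos] with r hr ⟨hr0, hr1⟩
  exact (le_elog_mul_inv_log_iff hr0 hr1).1 hr.le

theorem tauLow_le_of_frequently_le_packSum {b : ℝ}
    (h : ∃ᶠ r in 𝓝[>] (0 : ℝ), ENNReal.ofReal (r ^ b) ≤ packSum μ q r) : tauLow μ q ≤ b := by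
  refine liminf_le_of_frequently_le <| (h.and_eventually (Ioo_mem_nhdsGT one_pos)).mono ?_
  rintro r ⟨hr, hr0, hr1⟩
  exact (elog_mul_inv_log_le_iff hr0 hr1).2 hr

theorem fLDup_top_le (hq : q ≤ 0) (hc : (c : EReal) < tauLow μ q) (A : ℝ) :
    fLDup μ ⊤ ≤ ((A * q - c : ℝ) : EReal) := by
  rw [fLDup, if_pos rfl]
  refine (iInf_le _ A).trans <| limsup_le_of_le (by isBoundedDefault) ?_
  filter_upwards [eventually_packSum_le_of_lt_tauLow hc, Ioo_mem_nhdsGT one_pos]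
    with r hps ⟨hr0, hr1⟩
  rw [show A * q - c = -(c - A * q) by ring, EReal.coe_neg, elog_mul_inv_neg_log_le_neg_iff hr0 hr1]
  have hrA : ENNReal.ofReal (r ^ A) ^ q = ENNReal.ofReal (r ^ (A * q)) := by
    rw [ENNReal.ofReal_rpow_of_pos (Real.rpow_pos_of_pos hr0 A), ← Real.rpow_mul hr0.le]
  have hunit : ENNReal.ofReal (r ^ (-(A * q))) * ENNReal.ofReal (r ^ (A * q)) = 1 := by
    rw [← ENNReal.ofReal_mul (Real.rpow_nonneg hr0.le _), ← Real.rpow_add hr0, neg_add_cancel,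
      Real.rpow_zero, ENNReal.ofReal_one]
  calc ldCount μ 0 (ENNReal.ofReal (r ^ A)) r
      = ENNReal.ofReal (r ^ (-(A * q))) *
          (ENNReal.ofReal (r ^ A) ^ q * ldCount μ 0 (ENNReal.ofReal (r ^ A)) r) := by
        rw [hrA, ← mul_assoc, hunit, one_mul]
    _ ≤ ENNReal.ofReal (r ^ (-(A * q))) * ENNReal.ofReal (r ^ c) :=
        mul_le_mul_right ((rpow_mul_ldCount_le_packSum hq).trans hps) _
    _ = ENNReal.ofReal (r ^ (c - A * q)) := by
        rw [← ENNReal.ofReal_mul (Real.rpow_nonneg hr0.le _), ← Real.rpow_add hr0, neg_add_eq_sub]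

theorem fLDup_top_le_neg_tauLow_zero : fLDup μ ⊤ ≤ -tauLow μ 0 :=
  EReal.le_neg_of_forall_coe_lt fun c hc => by simpa using fLDup_top_le le_rfl hc 0

theorem fLDup_top_eq_bot (hq : q < 0) (hτ : tauLow μ q ≠ ⊥) : fLDup μ ⊤ = ⊥ := by
  obtain ⟨c, -, hc⟩ := EReal.exists_between_coe_real (Ne.bot_lt hτ)
  refine EReal.eq_bot_of_forall_le_coe fun M => ?_
  simpa [div_mul_cancel₀ _ hq.ne] using fLDup_top_le hq.le hc ((M + c) / q)

theorem tauLow_le_of_mem_Epoint_top {x : Euc d} (hx : x ∈ Epoint μ ⊤) (hq : q ≤ 0) (A : ℝ) :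
    tauLow μ q ≤ ((A * q : ℝ) : EReal) := by
  have hA : (A : EReal) < dLow μ x := hx.2.1 ▸ EReal.coe_lt_top A
  refine tauLow_le_of_frequently_le_packSum (Eventually.frequently ?_)
  filter_upwards [eventually_lt_of_lt_liminf hA, Ioo_mem_nhdsGT one_pos] with r hr ⟨hr0, hr1⟩
  have hball : μ (closedBall x r) ≤ ENNReal.ofReal (r ^ A) :=
    (le_elog_mul_inv_log_iff hr0 hr1).1 hr.le
  calc ENNReal.ofReal (r ^ (A * q)) = ENNReal.ofReal (r ^ A) ^ q := by
        rw [ENNReal.ofReal_rpow_of_pos (Real.rpow_pos_of_pos hr0 A), ← Real.rpow_mul hr0.le]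
    _ ≤ μ (closedBall x r) ^ q := ENNReal.rpow_le_rpow_of_nonpos_s14 hball hq
    _ ≤ packSum μ q r := rpow_le_packSum hx.1 q r

theorem Epoint_top_eq_empty (hq : q < 0) (hτ : tauLow μ q ≠ ⊥) : Epoint μ ⊤ = ∅ := by
  refine eq_empty_of_forall_notMem fun x hx => hτ (EReal.eq_bot_of_forall_le_coe fun M => ?_)
  simpa [div_mul_cancel₀ _ hq.ne] using tauLow_le_of_mem_Epoint_top hx hq.le (M / q)

theorem exists_finset_cover_msupp (hr : 0 < r) (h : packSum μ 0 r ≤ ENNReal.ofReal (r ^ c)) :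
    ∃ P : Finset (Euc d), (P.card : ℝ) ≤ r ^ c ∧ msupp μ ⊆ ⋃ x ∈ P, closedBall x (2 * r) := by
  obtain ⟨P, hcard, hcover⟩ := Metric.exists_finset_cover_closedBall_two_mul (N := ⌊r ^ c⌋₊)
    hr.le fun P hPs hP => ENat.le_floor_of_toENNReal_le_ofReal
      ((encard_le_packSum_zero ⟨hPs, hP⟩).trans h)
  exact ⟨P, (Nat.cast_le.2 hcard).trans (Nat.floor_le (Real.rpow_nonneg hr.le c)), hcover⟩

theorem dimH_msupp_le (hc : (c : EReal) < tauLow μ 0) : dimH (msupp μ) ≤ ENNReal.ofReal (-c) := by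
  have hhalf : Tendsto (fun r : ℝ => r / 2) (𝓝[>] 0) (𝓝[>] 0) :=
    tendsto_nhdsWithin_of_tendsto_nhds_of_eventually_within _
      ((continuous_id.div_const 2).tendsto' 0 0 (zero_div 2) |>.mono_left nhdsWithin_le_nhds)
      (eventually_mem_nhdsWithin.mono fun r (hr : 0 < r) => half_pos hr)
  refine dimH_le_of_card_cover_le (C := 2 ^ (-c)) ?_
  filter_upwards [hhalf.eventually (eventually_packSum_le_of_lt_tauLow hc), self_mem_nhdsWithin]
    with r hps (hr : 0 < r)
  obtain ⟨P, hcard, hcover⟩ := exists_finset_cover_msupp (half_pos hr) hps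
  refine ⟨P, ?_, by rwa [mul_div_cancel₀ r two_ne_zero] at hcover⟩
  rwa [neg_neg, ← mul_comm, Real.rpow_neg zero_le_two, ← div_eq_mul_inv,
    ← Real.div_rpow hr.le zero_le_two]

theorem dimHE_Epoint_top_le_neg_tauLow_zero : dimHE (Epoint μ ⊤) ≤ -tauLow μ 0 := by
  rw [dimHE]
  split_ifs with hE
  · exact bot_le
  obtain ⟨x, hx⟩ := nonempty_iff_ne_empty.2 hE
  refine EReal.le_neg_of_forall_coe_lt fun c hc => ?_
  have hτ0 : tauLow μ 0 ≤ 0 := by simpa using tauLow_le_of_mem_Epoint_top hx le_rfl 0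
  have hc0 : c ≤ 0 := by exact_mod_cast (hc.trans_le hτ0).le
  calc ((dimH (Epoint μ ⊤) : ℝ≥0∞) : EReal) ≤ ((ENNReal.ofReal (-c) : ℝ≥0∞) : EReal) :=
        EReal.coe_ennreal_le_coe_ennreal_iff.2
          ((dimH_mono fun x hx => hx.1).trans (dimH_msupp_le hc))
    _ = -(c : EReal) := by rw [EReal.coe_ennreal_ofReal, max_eq_left (by linarith), EReal.coe_neg]

end Packing

theorem le_eLegendre_top {τ : ℝ → EReal} {x : EReal} (hneg : ∀ q < 0, τ q ≠ ⊥ → x = ⊥)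
    (hzero : x ≤ -τ 0) : x ≤ eLegendre τ ⊤ := by
  refine le_sInf ?_
  rintro _ ⟨q, hq, hq0, rfl⟩
  rcases (hq0 rfl).lt_or_eq with hlt | rfl
  · rw [hneg q hlt hq]
    exact bot_le
  · simpa using hzero

theorem statement14_general (d : ℕ) (μ : Measure (Euc d)) :
    fLDup μ ⊤ ≤ eLegendre (tauLow μ) ⊤ ∧
    dimHE (Epoint μ ⊤) ≤ eLegendre (tauLow μ) ⊤ ∧
    ({q : ℝ | tauLow μ q ≠ ⊥} = Set.univ → fLDup μ ⊤ = ⊥ ∧ Epoint μ ⊤ = ∅) ∧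
    ({q : ℝ | tauLow μ q ≠ ⊥} = Set.Ici 0 →
      fLDup μ ⊤ ≤ -tauLow μ 0 ∧ dimHE (Epoint μ ⊤) ≤ -tauLow μ 0) := by
  have hdimHE : ∀ q < 0, tauLow μ q ≠ ⊥ → dimHE (Epoint μ ⊤) = ⊥ := fun q hq hτ => by
    rw [Epoint_top_eq_empty hq hτ, dimHE, if_pos rfl]
  refine ⟨le_eLegendre_top (fun q => fLDup_top_eq_bot) fLDup_top_le_neg_tauLow_zero,
    le_eLegendre_top hdimHE dimHE_Epoint_top_le_neg_tauLow_zero, fun hdom => ?_,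
    fun _ => ⟨fLDup_top_le_neg_tauLow_zero, dimHE_Epoint_top_le_neg_tauLow_zero⟩⟩
  have hτ : tauLow μ (-1) ≠ ⊥ := by
    change (-1 : ℝ) ∈ {q : ℝ | tauLow μ q ≠ ⊥}
    exact hdom ▸ mem_univ _
  exact ⟨fLDup_top_eq_bot neg_one_lt_zero hτ, Epoint_top_eq_empty neg_one_lt_zero hτ⟩

/-- part of (1.3) at `α = ∞`: `f̄^LD_μ(∞) ≤ τ_μ*(∞)` and
`dim_H E(μ,∞) ≤ τ_μ*(∞)`, explicitly in the two possible cases for `dom τ_μ`. -/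
theorem statement14 (d : ℕ) (hd : 1 ≤ d) (μ : Measure (Euc d)) (hμ : McPlus μ) :
    fLDup μ ⊤ ≤ eLegendre (tauLow μ) ⊤ ∧
    dimHE (Epoint μ ⊤) ≤ eLegendre (tauLow μ) ⊤ ∧
    ({q : ℝ | tauLow μ q ≠ ⊥} = Set.univ → fLDup μ ⊤ = ⊥ ∧ Epoint μ ⊤ = ∅) ∧
    ({q : ℝ | tauLow μ q ≠ ⊥} = Set.Ici 0 →
      fLDup μ ⊤ ≤ -tauLow μ 0 ∧ dimHE (Epoint μ ⊤) ≤ -tauLow μ 0) :=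
  statement14_general d μ

end
end
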